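/- Let d = 2 and μ₂ the measure r·dr on (0,∞). Define U f(r) = χ_{(1/2,∞)}(r) · sup_{t∈[1,2], t<2r} (1/r) ∫_{|r−t|}^{r+t} z f(z) dz. Then U is bounded from L¹(μ₂) to L^p(μ₂) for every 1 ≤ p ≤ ∞. -/

import Mathlib

/-!
For `r > 1/2` and `t ∈ [1,2]` the window `[|r - t|, r + t]` lies in `[r - 2, r + 2]`, so
`U f(r) ≤ r⁻¹ ∫_{r-2}^{r+2} z f(z) dz`. This gives `U f ≤ 2 ‖f‖₁` pointwise, and, by Tonelli,
`∫ U f dμ₂ ≤ ∫ ∫_{r-2}^{r+2} z f(z) dz dr = 4 ‖f‖₁`. A function bounded by `c` in both `L¹` and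
`L^∞` is bounded by `c` in every `L^p`, since `g^p ≤ c^(p-1) g`.
-/

open Set MeasureTheory
open scoped ENNReal NNReal

noncomputable section

/-- The measure `μ₂` on `(0,∞)` with density `r`. -/
def mu2 : Measure ℝ :=
  (volume.restrict (Ioi (0 : ℝ))).withDensity fun r => ENNReal.ofReal r

/-- The `L^p(μ)` norm of an `ℝ≥0∞`-valued function (with `p = ∞` meaning the
essential supremum). -/
def lpNormE (μ : Measure ℝ) (p : ℝ≥0∞) (g : ℝ → ℝ≥0∞) : ℝ≥0∞ :=
  if p = ∞ then essSup g μ else (∫⁻ r, g r ^ p.toReal ∂μ) ^ (1 / p.toReal)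

/-- `U f(r) = χ_{(1/2,∞)}(r) · sup_{t∈[1,2], t<2r} (1/r) ∫_{|r−t|}^{r+t} z f(z) dz`. -/
def Uop (f : ℝ → ℝ≥0∞) (r : ℝ) : ℝ≥0∞ :=
  if 1 / 2 < r then
    ⨆ t ∈ {t : ℝ | t ∈ Icc (1 : ℝ) 2 ∧ t < 2 * r},
      (ENNReal.ofReal r)⁻¹ * ∫⁻ z in Icc |r - t| (r + t), ENNReal.ofReal z * f z
  else 0

theorem lpNormE_one (μ : Measure ℝ) (g : ℝ → ℝ≥0∞) : lpNormE μ 1 g = ∫⁻ x, g x ∂μ := by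
  simp [lpNormE]

theorem lpNormE_le_of_ae_le_of_lintegral_le {μ : Measure ℝ} {p : ℝ≥0∞} (hp : 1 ≤ p)
    {g : ℝ → ℝ≥0∞} {c : ℝ≥0∞} (hg : ∀ᵐ x ∂μ, g x ≤ c) (hint : ∫⁻ x, g x ∂μ ≤ c) :
    lpNormE μ p g ≤ c := by
  rcases eq_or_ne p ∞ with rfl | hp_top
  · simpa [lpNormE] using essSup_le_of_ae_le c hg
  rcases eq_or_ne c ∞ with rfl | hc_top
  · exact le_top
  rw [lpNormE, if_neg hp_top]
  set q := p.toReal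
  have hq : 1 ≤ q := by simpa using ENNReal.toReal_mono hp_top hp
  have hsplit (y : ℝ≥0∞) : y ^ q = y ^ (q - 1) * y :=
    calc y ^ q = y ^ (q - 1 + 1) := by rw [sub_add_cancel]
      _ = y ^ (q - 1) * y := by
        rw [ENNReal.rpow_add_of_nonneg _ _ (by linarith) zero_le_one, ENNReal.rpow_one]
  have hint_pow : ∫⁻ x, g x ^ q ∂μ ≤ c ^ q :=
    calc ∫⁻ x, g x ^ q ∂μ ≤ ∫⁻ x, c ^ (q - 1) * g x ∂μ := by
          refine lintegral_mono_ae (hg.mono fun x hx => ?_)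
          rw [hsplit]
          gcongr
      _ = c ^ (q - 1) * ∫⁻ x, g x ∂μ :=
          lintegral_const_mul' _ _ (ENNReal.rpow_ne_top_of_nonneg (by linarith) hc_top)
      _ ≤ c ^ q := by rw [hsplit c]; gcongr
  calc (∫⁻ x, g x ^ q ∂μ) ^ (1 / q) ≤ (c ^ q) ^ (1 / q) := by gcongr
    _ = c := by rw [← ENNReal.rpow_mul, mul_one_div_cancel (by positivity), ENNReal.rpow_one]

theorem lintegral_setLIntegral_Icc_sub_add {g : ℝ → ℝ≥0∞} (hg : Measurable g) (a : ℝ) :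
    ∫⁻ r, ∫⁻ z in Icc (r - a) (r + a), g z = ENNReal.ofReal (2 * a) * ∫⁻ z, g z := by
  have hwindow (r z : ℝ) :
      (Icc (r - a) (r + a)).indicator g z = (Icc (z - a) (z + a)).indicator (fun _ => g z) r := by
    simp only [indicator_apply, mem_Icc]
    congr 1
    apply propext
    constructor <;> rintro ⟨h₁, h₂⟩ <;> constructor <;> linarith
  calc ∫⁻ r, ∫⁻ z in Icc (r - a) (r + a), g z
      = ∫⁻ r, ∫⁻ z, (Icc (z - a) (z + a)).indicator (fun _ => g z) r := by
        simp_rw [← lintegral_indicator measurableSet_Icc, hwindow]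
    _ = ∫⁻ z, ∫⁻ r, (Icc (z - a) (z + a)).indicator (fun _ => g z) r := by
        refine lintegral_lintegral_swap (Measurable.aemeasurable ?_)
        have hS : MeasurableSet {q : ℝ × ℝ | q.1 ∈ Icc (q.2 - a) (q.2 + a)} :=
          (measurableSet_le (f := fun q : ℝ × ℝ => q.2 - a) (by fun_prop) (by fun_prop)).inter
            (measurableSet_le (g := fun q : ℝ × ℝ => q.2 + a) (by fun_prop) (by fun_prop))
        exact (hg.comp measurable_snd).indicator hS
    _ = ∫⁻ z, ENNReal.ofReal (2 * a) * g z := by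
        congr with z
        rw [lintegral_indicator_const measurableSet_Icc, Real.volume_Icc, mul_comm]
        ring_nf
    _ = ENNReal.ofReal (2 * a) * ∫⁻ z, g z := lintegral_const_mul _ hg

theorem lintegral_mu2 (g : ℝ → ℝ≥0∞) : ∫⁻ r, g r ∂mu2 = ∫⁻ r, ENNReal.ofReal r * g r := by
  rw [mu2, lintegral_withDensity_eq_lintegral_mul_non_measurable _ ENNReal.measurable_ofReal
    (ae_of_all _ fun _ => ENNReal.ofReal_lt_top)]
  refine setLIntegral_eq_of_support_subset fun r hr => ?_
  by_contra hr_pos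
  simp [ENNReal.ofReal_of_nonpos (not_lt.1 hr_pos)] at hr

theorem Uop_le_inv_mul_setLIntegral (f : ℝ → ℝ≥0∞) (r : ℝ) :
    Uop f r ≤ (ENNReal.ofReal r)⁻¹ * ∫⁻ z in Icc (r - 2) (r + 2), ENNReal.ofReal z * f z := by
  unfold Uop
  split_ifs
  · refine iSup₂_le fun t ⟨⟨ht₁, ht₂⟩, _⟩ => ?_
    gcongr
    linarith [le_abs_self (r - t)]
  · exact zero_le

theorem Uop_le_two_mul (f : ℝ → ℝ≥0∞) (r : ℝ) : Uop f r ≤ 2 * ∫⁻ z, f z ∂mu2 := by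
  by_cases hr : 1 / 2 < r
  · have hr_inv : (ENNReal.ofReal r)⁻¹ ≤ 2 := by
      rw [ENNReal.inv_le_iff_inv_le, ← ENNReal.ofReal_ofNat, ← ENNReal.ofReal_inv_of_pos two_pos]
      exact ENNReal.ofReal_le_ofReal (by linarith)
    calc Uop f r
        ≤ (ENNReal.ofReal r)⁻¹ * ∫⁻ z in Icc (r - 2) (r + 2), ENNReal.ofReal z * f z :=
          Uop_le_inv_mul_setLIntegral f r
      _ ≤ 2 * ∫⁻ z, ENNReal.ofReal z * f z := by gcongr; exact Measure.restrict_le_self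
      _ = 2 * ∫⁻ z, f z ∂mu2 := by rw [lintegral_mu2]
  · rw [Uop, if_neg hr]
    exact zero_le

theorem lintegral_Uop_le {f : ℝ → ℝ≥0∞} (hf : Measurable f) :
    ∫⁻ r, Uop f r ∂mu2 ≤ 4 * ∫⁻ z, f z ∂mu2 :=
  calc ∫⁻ r, Uop f r ∂mu2 = ∫⁻ r, ENNReal.ofReal r * Uop f r := lintegral_mu2 _
    _ ≤ ∫⁻ r, ∫⁻ z in Icc (r - 2) (r + 2), ENNReal.ofReal z * f z := by
        refine lintegral_mono fun r => ?_
        calc ENNReal.ofReal r * Uop f r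
            ≤ ENNReal.ofReal r * (ENNReal.ofReal r)⁻¹ *
                ∫⁻ z in Icc (r - 2) (r + 2), ENNReal.ofReal z * f z := by
              rw [mul_assoc]; gcongr; exact Uop_le_inv_mul_setLIntegral f r
          _ ≤ ∫⁻ z in Icc (r - 2) (r + 2), ENNReal.ofReal z * f z :=
              mul_le_of_le_one_left zero_le (ENNReal.mul_inv_le_one _)
    _ = 4 * ∫⁻ z, f z ∂mu2 := by
        rw [lintegral_setLIntegral_Icc_sub_add (by fun_prop), lintegral_mu2]
        norm_num

theorem Uop_L1_to_Lp (p : ℝ≥0∞) (hp : 1 ≤ p) :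
    ∃ C : ℝ≥0, ∀ f : ℝ → ℝ≥0∞, Measurable f →
      lpNormE mu2 p (Uop f) ≤ C * lpNormE mu2 1 f := by
  refine ⟨4, fun f hf => ?_⟩
  rw [lpNormE_one, ENNReal.coe_ofNat]
  refine lpNormE_le_of_ae_le_of_lintegral_le hp (ae_of_all _ fun r => ?_) (lintegral_Uop_le hf)
  exact (Uop_le_two_mul f r).trans (by gcongr; norm_num)
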